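/- arXiv:2506.11801 — 2 statements merged into one kernel-verified Lean document; each statement's English description precedes it below -/
import Mathlib

section
/- Let (I_k)_{k≥1} be a sequence of linear quadrature functionals on a space of univariate functions, set Δ_ℓ = I_ℓ − I_{ℓ−1} with I₀ = 0, and define the Smolyak rule S_{L,M} = Σ_{|α| ≤ L} Δ_{α₁} ⊗ ⋯ ⊗ Δ_{α_M} over multi-indices α ∈ ℕ^M with α_m ≥ 1. Then S_{L,M} = Σ_{ν ∈ P_{L,M}} (−1)^{L−|ν|} · C(M−1, L−|ν|) · I_{ν₁} ⊗ ⋯ ⊗ I_{ν_M}, where P_{L,M} = { ν ∈ ℕ^M : ν_m ≥ 1, L − M < |ν| ≤ L } and C denotes the binomial coefficient. (Combination technique identity.) -/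
open scoped BigOperators


lemma altsum (M : ℕ) (hM : 0 < M) (j : ℕ) :
    ∑ k ∈ Finset.range (j+1), (-1:ℝ)^k * (Nat.choose M k) = (-1)^j * (Nat.choose (M-1) j) := by
  induction j with
  | zero => simp
  | succ j ih =>
    rw [Finset.sum_range_succ, ih]
    obtain ⟨N, rfl⟩ : ∃ N, M = N + 1 := ⟨M - 1, by omega⟩
    simp only [Nat.add_sub_cancel, Nat.choose_succ_succ]
    push_cast
    ring

lemma boolsum (M : ℕ) (hM : 0 < M) (j : ℕ) :
    ∑ ε ∈ (Finset.univ : Finset (Fin M → Bool)).filter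
        (fun ε => (Finset.univ.filter fun m => ε m).card ≤ j),
      (-1:ℝ)^(Finset.univ.filter fun m => ε m).card
      = (-1)^j * (Nat.choose (M-1) j) := by
  rw [← altsum M hM j]
  have h1 : ∑ ε ∈ (Finset.univ : Finset (Fin M → Bool)).filter
        (fun ε => (Finset.univ.filter fun m => ε m).card ≤ j),
      (-1:ℝ)^(Finset.univ.filter fun m => ε m).card
      = ∑ s ∈ (Finset.univ : Finset (Finset (Fin M))).filter (fun s => s.card ≤ j),
        (-1:ℝ)^s.card := by
    apply Finset.sum_nbij' (i := fun (ε : Fin M → Bool) => Finset.univ.filter (fun m => ε m = true))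
      (j := fun (s : Finset (Fin M)) (m : Fin M) => decide (m ∈ s))
    · intro ε hε
      simpa using (Finset.mem_filter.mp hε).2
    · intro s hs
      simp only [Finset.mem_filter, Finset.mem_univ, true_and] at hs ⊢
      convert hs using 2
      ext m; simp
    · intro ε _; ext m; simp
    · intro s _; ext m; simp
    · intro ε _; rfl
  rw [h1]
  rw [← Finset.sum_fiberwise_of_maps_to (g := Finset.card)
    (t := Finset.range (j+1)) (fun s hs => by
      simp only [Finset.mem_filter] at hs; simp [Finset.mem_range]; omega)]
  apply Finset.sum_congr rfl
  intro k hk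
  simp only [Finset.mem_range] at hk
  have : (Finset.univ.filter (fun s : Finset (Fin M) => s.card ≤ j)).filter
      (fun s => s.card = k) = Finset.powersetCard k (Finset.univ : Finset (Fin M)) := by
    ext s
    simp [Finset.mem_powersetCard, Finset.filter_filter]
    omega
  rw [this]
  rw [Finset.sum_congr rfl (fun s hs => by
    rw [(Finset.mem_powersetCard.mp hs).2])]
  rw [Finset.sum_const, Finset.card_powersetCard, Finset.card_univ, Fintype.card_fin]
  simp [mul_comm]

/-- the Smolyak combination technique identity. `J ν` plays the role of
the product rule `I_{ν₁} ⊗ ⋯ ⊗ I_{ν_M}` applied to a fixed integrand (with the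
convention `I₀ = 0`), and `D α` is the tensor product of differences
`Δ_{α₁} ⊗ ⋯ ⊗ Δ_{α_M}` expanded multilinearly. -/
theorem stmt_9 {M : ℕ} (hM : 0 < M) (L : ℕ)
    (J : (Fin M → ℕ) → ℝ)
    (hJ0 : ∀ ν : Fin M → ℕ, (∃ m, ν m = 0) → J ν = 0)
    (D : (Fin M → ℕ) → ℝ)
    (hD : ∀ α : Fin M → ℕ, D α =
      ∑ ε : Fin M → Bool,
        (-1 : ℝ) ^ (Finset.univ.filter fun m => ε m).card *
          J (fun m => α m - if ε m then 1 else 0)) :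
    ∑ α ∈ (Finset.Iic (fun _ => L : Fin M → ℕ)).filter
        (fun α => (∀ m, 1 ≤ α m) ∧ ∑ m, α m ≤ L), D α
      =
    ∑ ν ∈ (Finset.Iic (fun _ => L : Fin M → ℕ)).filter
        (fun ν => (∀ m, 1 ≤ ν m) ∧ L - M < ∑ m, ν m ∧ ∑ m, ν m ≤ L),
      (-1 : ℝ) ^ (L - ∑ m, ν m) * (Nat.choose (M - 1) (L - ∑ m, ν m)) * J ν := by
  classical
  have sum_eps : ∀ ε : Fin M → Bool,
      (∑ m, (if ε m then 1 else 0 : ℕ)) = (Finset.univ.filter fun m => ε m).card :=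
    fun ε => (Finset.card_filter _ _).symm
  have memIic : ∀ ν : Fin M → ℕ, ν ∈ Finset.Iic (fun _ => L : Fin M → ℕ) ↔ ∀ m, ν m ≤ L := by
    intro ν; rw [Finset.mem_Iic]; exact Pi.le_def.trans Iff.rfl
  rw [Finset.sum_filter]
  have step1 : ∀ α ∈ Finset.Iic (fun _ => L : Fin M → ℕ),
      (if (∀ m, 1 ≤ α m) ∧ ∑ m, α m ≤ L then D α else 0)
      = ∑ ε : Fin M → Bool,
          if (∀ m, 1 ≤ α m - (if ε m then 1 else 0)) ∧ ∑ m, α m ≤ L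
          then (-1:ℝ)^(Finset.univ.filter fun m => ε m).card *
            J (fun m => α m - if ε m then 1 else 0) else 0 := by
    intro α _
    by_cases hα : (∀ m, 1 ≤ α m) ∧ ∑ m, α m ≤ L
    · rw [if_pos hα, hD]
      apply Finset.sum_congr rfl; intro ε _
      by_cases h2 : (∀ m, 1 ≤ α m - (if ε m then 1 else 0)) ∧ ∑ m, α m ≤ L
      · rw [if_pos h2]
      · rw [if_neg h2]
        have hz : ∃ m, α m - (if ε m then 1 else 0) = 0 := by
          have h3 : ¬ ∀ m, 1 ≤ α m - (if ε m then 1 else 0) := fun h => h2 ⟨h, hα.2⟩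
          push_neg at h3; obtain ⟨m, hm⟩ := h3; exact ⟨m, by omega⟩
        rw [hJ0 _ hz, mul_zero]
    · rw [if_neg hα]
      refine (Finset.sum_eq_zero fun ε _ => ?_).symm
      rw [if_neg]
      rintro ⟨h1, h2⟩
      exact hα ⟨fun m => le_trans (h1 m) (Nat.sub_le _ _), h2⟩
  rw [Finset.sum_congr rfl step1, Finset.sum_comm]
  have step2 : ∀ ε : Fin M → Bool,
      (∑ α ∈ Finset.Iic (fun _ => L : Fin M → ℕ),
        if (∀ m, 1 ≤ α m - (if ε m then 1 else 0)) ∧ ∑ m, α m ≤ L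
        then (-1:ℝ)^(Finset.univ.filter fun m => ε m).card *
          J (fun m => α m - if ε m then 1 else 0) else 0)
      = ∑ ν ∈ Finset.Iic (fun _ => L : Fin M → ℕ),
        if (∀ m, 1 ≤ ν m) ∧ ∑ m, ν m + (Finset.univ.filter fun m => ε m).card ≤ L
        then (-1:ℝ)^(Finset.univ.filter fun m => ε m).card * J ν else 0 := by
    intro ε
    rw [← Finset.sum_filter, ← Finset.sum_filter]
    apply Finset.sum_nbij'
      (i := fun (α : Fin M → ℕ) (m : Fin M) => α m - (if ε m then 1 else 0))
      (j := fun (ν : Fin M → ℕ) (m : Fin M) => ν m + (if ε m then 1 else 0))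
    · intro α hα
      simp only [Finset.mem_filter, memIic] at hα ⊢
      obtain ⟨hle, h1, h2⟩ := hα
      have hsum : ∑ m, (α m - (if ε m then 1 else 0)) + ∑ m, (if ε m then 1 else 0 : ℕ)
          = ∑ m, α m := by
        rw [← Finset.sum_add_distrib]
        exact Finset.sum_congr rfl (fun m _ => by have := h1 m; omega)
      refine ⟨fun m => le_trans (Nat.sub_le _ _) (hle m), h1, ?_⟩
      rw [← sum_eps ε]; omega
    · intro ν hν
      simp only [Finset.mem_filter, memIic] at hν ⊢
      obtain ⟨hle, h1, h2⟩ := hν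
      have hsum : ∑ m, (ν m + (if ε m then 1 else 0 : ℕ))
          = ∑ m, ν m + ∑ m, (if ε m then 1 else 0 : ℕ) := Finset.sum_add_distrib
      rw [sum_eps ε] at hsum
      refine ⟨fun m => ?_, fun m => by have := h1 m; omega, by omega⟩
      calc ν m + (if ε m then 1 else 0)
          ≤ ∑ k, (ν k + (if ε k then 1 else 0 : ℕ)) :=
            Finset.single_le_sum (f := fun k => ν k + (if ε k then 1 else 0))
              (fun k _ => Nat.zero_le _) (Finset.mem_univ m)
        _ ≤ L := by omega
    · intro α hα
      rw [Finset.mem_filter] at hα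
      funext m
      have h : 1 ≤ α m - (if ε m then 1 else 0) := hα.2.1 m
      show (α m - (if ε m then 1 else 0)) + (if ε m then 1 else 0) = α m
      omega
    · intro ν hν
      funext m
      show (ν m + (if ε m then 1 else 0)) - (if ε m then 1 else 0) = ν m
      omega
    · intro α _; rfl
  rw [Finset.sum_congr rfl (fun ε _ => step2 ε), Finset.sum_comm, Finset.sum_filter]
  apply Finset.sum_congr rfl
  intro ν hν
  rw [memIic] at hν
  by_cases hp : ∀ m, 1 ≤ ν m
  · have hMsum : M ≤ ∑ m, ν m := by
      calc M = ∑ _m : Fin M, 1 := by simp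
        _ ≤ ∑ m, ν m := Finset.sum_le_sum (fun m _ => hp m)
    by_cases hL : ∑ m, ν m ≤ L
    · have hiff : ∀ ε : Fin M → Bool,
          ((∀ m, 1 ≤ ν m) ∧ ∑ m, ν m + (Finset.univ.filter fun m => ε m).card ≤ L)
          ↔ (Finset.univ.filter fun m => ε m).card ≤ L - ∑ m, ν m := by
        intro ε; constructor
        · rintro ⟨-, h⟩; omega
        · intro h; exact ⟨hp, by omega⟩
      simp only [hiff]
      rw [← Finset.sum_filter, ← Finset.sum_mul, boolsum M hM (L - ∑ m, ν m)]
      by_cases hM' : L - M < ∑ m, ν m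
      · rw [if_pos ⟨hp, hM', hL⟩]
      · rw [if_neg (fun h => hM' h.2.1)]
        have : Nat.choose (M - 1) (L - ∑ m, ν m) = 0 :=
          Nat.choose_eq_zero_of_lt (by omega)
        rw [this]; push_cast; ring
    · rw [if_neg (fun h => hL h.2.2)]
      apply Finset.sum_eq_zero
      intro ε _
      rw [if_neg]
      rintro ⟨-, h⟩; omega
  · rw [if_neg (fun h => hp h.1)]
    apply Finset.sum_eq_zero
    intro ε _
    rw [if_neg]
    rintro ⟨h, -⟩; exact hp h
end

section
/- Let S_{L,M} be the Smolyak sparse grid quadrature built from univariate Gauss–Hermite rules I_k with n_k = k nodes, and let L_SG = L − M + 1 ≥ 1. Then S_{L,M} integrates every M-variate polynomial of total degree at most 2·L_SG − 1 exactly with respect to the M-variate standard Gaussian measure. -/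
open MeasureTheory ProbabilityTheory

lemma smolyak_sum_div2 {ι : Type*} (s : Finset ι) (β : ι → ℕ) :
    (∑ m ∈ s, β m / 2) ≤ (∑ m ∈ s, β m) / 2 := by
  classical
  induction s using Finset.induction_on with
  | empty => simp
  | insert _ _ h ih =>
    rw [Finset.sum_insert h, Finset.sum_insert h]
    exact le_trans (Nat.add_le_add_left ih _) (Nat.add_div_le_add_div _ _ _)

lemma smolyak_telescope (F : ℕ → ℝ) (h0 : F 0 = 0) (k : ℕ) :
    ∑ j ∈ Finset.Icc 1 k, (F j - F (j - 1)) = F k := by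
  induction k with
  | zero => simpa using h0.symm
  | succ k ih =>
    rw [← Finset.insert_Icc_right_eq_Icc_add_one (Nat.succ_le_succ (Nat.zero_le k)),
      Finset.sum_insert (by simp), ih, Nat.add_sub_cancel]
    ring

lemma smolyak_bool (M : ℕ) (f g : Fin M → ℝ) :
    ∑ ε : Fin M → Bool,
      (-1 : ℝ) ^ (Finset.univ.filter fun m => ε m).card * ∏ m, (if ε m then g m else f m)
      = ∏ m, (f m - g m) := by
  have h1 : ∀ ε : Fin M → Bool,
      (-1 : ℝ) ^ (Finset.univ.filter fun m => ε m).card * ∏ m, (if ε m then g m else f m)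
        = ∏ m, (if ε m then -g m else f m) := by
    intro ε
    have hsign : ((-1 : ℝ)) ^ (Finset.univ.filter fun m => ε m).card
        = ∏ m, (if ε m then (-1 : ℝ) else 1) := by
      rw [Finset.prod_ite, Finset.prod_const, Finset.prod_const, one_pow, mul_one]
    rw [hsign, ← Finset.prod_mul_distrib]
    exact Finset.prod_congr rfl fun m _ => by cases hm : ε m <;> simp
  simp_rw [h1]
  calc ∑ ε : Fin M → Bool, ∏ m, (if ε m then -g m else f m)
      = ∑ ε ∈ Fintype.piFinset (fun _ : Fin M => (Finset.univ : Finset Bool)),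
          ∏ m, (if ε m then -g m else f m) := by
        rw [show Fintype.piFinset (fun _ : Fin M => (Finset.univ : Finset Bool))
            = Finset.univ from Fintype.piFinset_univ]
    _ = ∏ m, ∑ b ∈ (Finset.univ : Finset Bool), (if b then -g m else f m) :=
        (Finset.prod_univ_sum (fun _ : Fin M => (Finset.univ : Finset Bool))
          (fun m b => if b then -g m else f m)).symm
    _ = ∏ m, (f m - g m) := by
        refine Finset.prod_congr rfl fun m _ => ?_
        simp only [Fintype.sum_bool]
        norm_num
        ring

lemma smolyak_integrable_pow (n : ℕ) :
    Integrable (fun x : ℝ => x ^ n) (gaussianReal 0 1) := by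
  rw [gaussianReal_of_var_ne_zero 0 one_ne_zero]
  rw [integrable_withDensity_iff (measurable_gaussianPDF 0 1)
    (Filter.Eventually.of_forall fun x => ENNReal.ofReal_lt_top)]
  have key : Integrable (fun x : ℝ => x ^ (n : ℝ) * Real.exp (-(2 : ℝ)⁻¹ * x ^ 2)) :=
    integrable_rpow_mul_exp_neg_mul_sq (by norm_num)
      (lt_of_lt_of_le (by norm_num) (Nat.cast_nonneg n))
  simp_rw [Real.rpow_natCast] at key
  have key2 := key.const_mul ((Real.sqrt (2 * Real.pi))⁻¹)
  refine key2.congr (Filter.Eventually.of_forall fun x => ?_)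
  simp only [gaussianPDF_def, ENNReal.toReal_ofReal (gaussianPDFReal_nonneg 0 1 x)]
  simp only [gaussianPDFReal, NNReal.coe_one, mul_one, sub_zero]
  rw [show -x ^ 2 / 2 = -(2 : ℝ)⁻¹ * x ^ 2 by ring]
  ring

lemma smolyak_integral_pi (M : ℕ) (f : Fin M → ℝ → ℝ) :
    ∫ x : Fin M → ℝ, ∏ m, f m (x m) ∂(Measure.pi fun _ => gaussianReal 0 1)
      = ∏ m, ∫ x, f m x ∂(gaussianReal 0 1) :=
  MeasureTheory.integral_fintype_prod_eq_prod (f := f) (μ := fun _ => gaussianReal 0 1)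

lemma smolyak_integrable_pi (M : ℕ) (f : Fin M → ℝ → ℝ)
    (hf : ∀ m, Integrable (f m) (gaussianReal 0 1)) :
    Integrable (fun x : Fin M → ℝ => ∏ m, f m (x m)) (Measure.pi fun _ => gaussianReal 0 1) :=
  MeasureTheory.Integrable.fintype_prod (f := f) (μ := fun _ => gaussianReal 0 1) hf

/-- the Smolyak sparse grid rule built from univariate Gauss–Hermite
rules (with `n_k = k` nodes, exact to degree `2k−1`) integrates every M-variate
polynomial of total degree at most `2·L_SG − 1`, `L_SG = L − M + 1`, exactly with
respect to the M-variate standard Gaussian measure. -/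
theorem stmt_11 (M L : ℕ) (hM : 1 ≤ M) (hL : M ≤ L)
    (ξ : ∀ k : ℕ, Fin k → ℝ) (w : ∀ k : ℕ, Fin k → ℝ)
    (hexact : ∀ k : ℕ, 1 ≤ k → ∀ p : Polynomial ℝ, p.natDegree ≤ 2 * k - 1 →
      ∑ j, w k j * p.eval (ξ k j) = ∫ x, p.eval x ∂(gaussianReal 0 1))
    (Iprod : (Fin M → ℕ) → ((Fin M → ℝ) → ℝ) → ℝ)
    (hIprod : ∀ ν q, Iprod ν q =
      ∑ α : (∀ m : Fin M, Fin (ν m)),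
        (∏ m, w (ν m) (α m)) * q (fun m => ξ (ν m) (α m)))
    (D : (Fin M → ℕ) → ((Fin M → ℝ) → ℝ) → ℝ)
    (hD : ∀ α q, D α q =
      ∑ ε : Fin M → Bool,
        (-1 : ℝ) ^ (Finset.univ.filter fun m => ε m).card *
          Iprod (fun m => α m - if ε m then 1 else 0) q)
    (S : ((Fin M → ℝ) → ℝ) → ℝ)
    (hS : ∀ q, S q = ∑ α ∈ (Finset.Iic (fun _ => L : Fin M → ℕ)).filter
        (fun α => (∀ m, 1 ≤ α m) ∧ ∑ m, α m ≤ L), D α q)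
    (P : MvPolynomial (Fin M) ℝ)
    (hdeg : P.totalDegree ≤ 2 * (L - M + 1) - 1) :
    S (fun x => MvPolynomial.eval x P)
      = ∫ x, MvPolynomial.eval x P ∂(Measure.pi fun _ : Fin M => gaussianReal 0 1) := by
  classical
  set gma : ℕ → ℝ := fun b => ∫ x, x ^ b ∂(gaussianReal 0 1) with hgma
  set I1 : ℕ → ℕ → ℝ := fun k b => ∑ j : Fin k, w k j * (ξ k j) ^ b with hI1
  have hI10 : ∀ b, I1 0 b = 0 := fun b => by simp [hI1]
  have hIg : ∀ k b, 1 ≤ k → b ≤ 2 * k - 1 → I1 k b = gma b := by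
    intro k b hk hb
    have h := hexact k hk (Polynomial.X ^ b)
      (by simpa [Polynomial.natDegree_X_pow] using hb)
    simpa [Polynomial.eval_pow, Polynomial.eval_X, hI1, hgma] using h
  -- tensor rule on monomials
  have hImono : ∀ (ν : Fin M → ℕ) (β : Fin M → ℕ),
      Iprod ν (fun x => ∏ m, x m ^ β m) = ∏ m, I1 (ν m) (β m) := by
    intro ν β
    rw [hIprod]
    have hdist : ∀ α : (∀ m : Fin M, Fin (ν m)),
        (∏ m, w (ν m) (α m)) * (∏ m, (ξ (ν m) (α m)) ^ β m)
          = ∏ m, (w (ν m) (α m) * (ξ (ν m) (α m)) ^ β m) :=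
      fun α => (Finset.prod_mul_distrib).symm
    simp_rw [hdist]
    rw [show (Finset.univ : Finset (∀ m : Fin M, Fin (ν m)))
        = Fintype.piFinset (fun m => (Finset.univ : Finset (Fin (ν m)))) from
        (Fintype.piFinset_univ).symm,
      ← Finset.prod_univ_sum (fun m => (Finset.univ : Finset (Fin (ν m))))
        (fun m j => w (ν m) j * ξ (ν m) j ^ β m)]
  -- difference rule on monomials
  have hDmono : ∀ (α : Fin M → ℕ) (β : Fin M → ℕ),
      D α (fun x => ∏ m, x m ^ β m)
        = ∏ m, (I1 (α m) (β m) - I1 (α m - 1) (β m)) := by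
    intro α β
    rw [hD]
    have h1 : ∀ ε : Fin M → Bool,
        Iprod (fun m => α m - if ε m then 1 else 0) (fun x => ∏ m, x m ^ β m)
          = ∏ m, (if ε m then I1 (α m - 1) (β m) else I1 (α m) (β m)) := by
      intro ε
      rw [hImono]
      exact Finset.prod_congr rfl fun m _ => by cases hm : ε m <;> simp [hm]
    simp_rw [h1]
    exact smolyak_bool M (fun m => I1 (α m) (β m)) (fun m => I1 (α m - 1) (β m))
  -- exactness on monomials
  have hmono : ∀ β : Fin M → ℕ, (∑ m, β m) ≤ 2 * (L - M + 1) - 1 →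
      S (fun x => ∏ m, x m ^ β m) = ∏ m, gma (β m) := by
    intro β hβ
    set k : Fin M → ℕ := fun m => β m / 2 + 1 with hk
    have hβk : ∀ m, β m ≤ 2 * k m - 1 := by intro m; simp only [hk]; omega
    have hkL : (∑ m, k m) ≤ L := by
      have h1 : (∑ m, β m / 2) ≤ (∑ m, β m) / 2 := smolyak_sum_div2 _ _
      have h2 : (∑ m, k m) = (∑ m, β m / 2) + M := by
        simp [hk, Finset.sum_add_distrib, Finset.card_univ]
      omega
    have hvanish : ∀ (m : Fin M) (j : ℕ), k m < j →
        I1 j (β m) - I1 (j - 1) (β m) = 0 := by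
      intro m j hj
      have hb := hβk m
      have hk1 : 1 ≤ k m := by simp [hk]
      have h1 : I1 j (β m) = gma (β m) := hIg _ _ (by omega) (by omega)
      have h2 : I1 (j - 1) (β m) = gma (β m) := hIg _ _ (by omega) (by omega)
      rw [h1, h2, sub_self]
    rw [hS]
    simp_rw [hDmono]
    have hsub : Fintype.piFinset (fun m => Finset.Icc 1 (k m)) ⊆
        (Finset.Iic (fun _ => L : Fin M → ℕ)).filter
          (fun α => (∀ m, 1 ≤ α m) ∧ ∑ m, α m ≤ L) := by
      intro α hα
      rw [Fintype.mem_piFinset] at hα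
      have h1 : ∀ m, 1 ≤ α m ∧ α m ≤ k m := by
        intro m; simpa [Finset.mem_Icc] using hα m
      have hsum : (∑ m, α m) ≤ L :=
        le_trans (Finset.sum_le_sum fun m _ => (h1 m).2) hkL
      refine Finset.mem_filter.mpr ⟨Finset.mem_Iic.mpr (Pi.le_def.mpr fun m => ?_),
        fun m => (h1 m).1, hsum⟩
      calc α m ≤ k m := (h1 m).2
        _ ≤ ∑ m', k m' := Finset.single_le_sum (fun _ _ => Nat.zero_le _) (Finset.mem_univ m)
        _ ≤ L := hkL
    have hzero : ∀ α ∈ (Finset.Iic (fun _ => L : Fin M → ℕ)).filter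
        (fun α => (∀ m, 1 ≤ α m) ∧ ∑ m, α m ≤ L),
        α ∉ Fintype.piFinset (fun m => Finset.Icc 1 (k m)) →
        (∏ m, (I1 (α m) (β m) - I1 (α m - 1) (β m))) = 0 := by
      intro α hα hα'
      rw [Fintype.mem_piFinset] at hα'
      push_neg at hα'
      obtain ⟨m, hm⟩ := hα'
      have h1 : 1 ≤ α m := ((Finset.mem_filter.mp hα).2).1 m
      have h2 : k m < α m := by
        rw [Finset.mem_Icc] at hm; omega
      exact Finset.prod_eq_zero (Finset.mem_univ m) (hvanish m (α m) h2)
    rw [← Finset.sum_subset hsub hzero,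
      ← Finset.prod_univ_sum (fun m => Finset.Icc 1 (k m))
        (fun m j => I1 j (β m) - I1 (j - 1) (β m))]
    refine Finset.prod_congr rfl fun m _ => ?_
    rw [smolyak_telescope (fun j => I1 j (β m)) (hI10 (β m)) (k m)]
    exact hIg (k m) (β m) (by simp [hk]) (hβk m)
  -- linearity
  have hIlin : ∀ (ν : Fin M → ℕ) (s : Finset (Fin M →₀ ℕ)) (c : (Fin M →₀ ℕ) → ℝ)
      (F : (Fin M →₀ ℕ) → (Fin M → ℝ) → ℝ),
      Iprod ν (fun x => ∑ b ∈ s, c b * F b x) = ∑ b ∈ s, c b * Iprod ν (F b) := by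
    intro ν s c F
    simp_rw [hIprod, Finset.mul_sum]
    rw [Finset.sum_comm]
    exact Finset.sum_congr rfl fun b _ => Finset.sum_congr rfl fun α _ => by ring
  have hDlin : ∀ (α : Fin M → ℕ) (s : Finset (Fin M →₀ ℕ)) (c : (Fin M →₀ ℕ) → ℝ)
      (F : (Fin M →₀ ℕ) → (Fin M → ℝ) → ℝ),
      D α (fun x => ∑ b ∈ s, c b * F b x) = ∑ b ∈ s, c b * D α (F b) := by
    intro α s c F
    simp_rw [hD, hIlin, Finset.mul_sum]
    rw [Finset.sum_comm]
    exact Finset.sum_congr rfl fun b _ => Finset.sum_congr rfl fun ε _ => by ring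
  have hSlin : ∀ (s : Finset (Fin M →₀ ℕ)) (c : (Fin M →₀ ℕ) → ℝ)
      (F : (Fin M →₀ ℕ) → (Fin M → ℝ) → ℝ),
      S (fun x => ∑ b ∈ s, c b * F b x) = ∑ b ∈ s, c b * S (F b) := by
    intro s c F
    simp_rw [hS, hDlin, Finset.mul_sum]
    rw [Finset.sum_comm]
  -- decompose P into monomials
  have hPeval : (fun x : Fin M → ℝ => MvPolynomial.eval x P)
      = fun x => ∑ b ∈ P.support, P.coeff b * ∏ m, x m ^ b m :=
    funext fun x => MvPolynomial.eval_eq' x P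
  have hdegb : ∀ b ∈ P.support, (∑ m, b m) ≤ 2 * (L - M + 1) - 1 := by
    intro b hb
    have h1 : (b.sum fun _ e => e) ≤ P.totalDegree := MvPolynomial.le_totalDegree hb
    have h2 : (b.sum fun _ e => e) = ∑ m, b m := Finsupp.sum_fintype _ _ (fun _ => rfl)
    omega
  rw [hPeval, hSlin P.support (fun b => P.coeff b) (fun b x => ∏ m, x m ^ b m),
    integral_finset_sum _ (fun b _ =>
      (smolyak_integrable_pi M (fun m x => x ^ b m)
        (fun m => smolyak_integrable_pow (b m))).const_mul _)]
  refine Finset.sum_congr rfl fun b hb => ?_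
  rw [integral_const_mul, hmono (fun m => b m) (hdegb b hb),
    smolyak_integral_pi M (fun m x => x ^ b m)]
end
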